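/- arXiv:1403.6758 — 2 statements merged into one kernel-verified Lean document; each statement's English description precedes it below -/
import Mathlib

section
/- Let $T \geq 1$, let $F$ be a finite set, and for each $i \in F$ and $t \in \{1,\dots,T\}$ let $x_i^t \geq 0$ with $\sum_{i \in F} x_i^t = 1$ for all $t$, and let $z_i^t \geq 0$ satisfy $z_i^t \geq x_i^t - x_i^{t+1}$ for $1 \leq t < T$. Suppose $[a,b] \subseteq \{1,\dots,T\}$ is an interval with $a < b$ such that $\sum_{i \in F} \min_{a \leq u \leq b} x_i^u < 1/2$. Then $\sum_{t=a}^{b-1} \sum_{i \in F} z_i^t > 1/2$. -/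
/-!
Each facility `i` starts the interval with `x i a` and at some time `u ∈ [a, b]` reaches its
minimum; by telescoping, the drop `x i a - x i u` is at most `∑_{t ∈ [a, u)} z i t`. Summing over
`i`, the total drop is `1 - ∑ i, min x i > 1/2`, so the switching variables exceed `1/2`.
-/

open Finset

theorem sub_eq_sum_Ico_sub_succ {α : Type*} [AddCommGroup α] (f : ℕ → α) {m n : ℕ}
    (hmn : m ≤ n) :
    f m - f n = ∑ t ∈ Ico m n, (f t - f (t + 1)) := by
  rw [← neg_sub, ← sum_Ico_sub f hmn, ← sum_neg_distrib]
  simp only [neg_sub]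

theorem sub_inf'_Icc_le_sum_Ico {α : Type*} [AddCommGroup α] [LinearOrder α]
    [IsOrderedAddMonoid α] {f g : ℕ → α} {a b : ℕ} (hab : a ≤ b)
    (hdrop : ∀ t ∈ Ico a b, f t - f (t + 1) ≤ g t) (hg : ∀ t ∈ Ico a b, 0 ≤ g t) :
    f a - (Icc a b).inf' (nonempty_Icc.mpr hab) f ≤ ∑ t ∈ Ico a b, g t := by
  obtain ⟨u, hu, hmin⟩ := (Icc a b).exists_mem_eq_inf' (nonempty_Icc.mpr hab) f
  obtain ⟨hau, hub⟩ := mem_Icc.mp hu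
  have hsub : Ico a u ⊆ Ico a b := Ico_subset_Ico le_rfl hub
  calc f a - (Icc a b).inf' (nonempty_Icc.mpr hab) f
      = ∑ t ∈ Ico a u, (f t - f (t + 1)) := by rw [hmin, sub_eq_sum_Ico_sub_succ f hau]
    _ ≤ ∑ t ∈ Ico a u, g t := sum_le_sum fun t ht => hdrop t (hsub ht)
    _ ≤ ∑ t ∈ Ico a b, g t := sum_le_sum_of_subset_of_nonneg hsub fun t ht _ => hg t ht

theorem fact_sum_z_gt_half_general
    {F : Type*} [Fintype F]
    (T : ℕ)
    (x z : F → ℕ → ℝ)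
    (hx1 : ∀ t ∈ Finset.Icc 1 T, ∑ i, x i t = 1)
    (hz0 : ∀ i, ∀ t ∈ Finset.Icc 1 T, 0 ≤ z i t)
    (hz : ∀ i, ∀ t, 1 ≤ t → t < T → x i t - x i (t + 1) ≤ z i t)
    (a b : ℕ) (ha : 1 ≤ a) (hab : a < b) (hb : b ≤ T)
    (hmin : ∑ i, (Finset.Icc a b).inf' (Finset.nonempty_Icc.mpr hab.le) (x i) < 1 / 2) :
    1 / 2 < ∑ t ∈ Finset.Ico a b, ∑ i, z i t := by
  have haT : a ∈ Icc 1 T := mem_Icc.mpr ⟨ha, by omega⟩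
  have hdrop (i : F) :
      x i a - (Icc a b).inf' (nonempty_Icc.mpr hab.le) (x i) ≤ ∑ t ∈ Ico a b, z i t :=
    sub_inf'_Icc_le_sum_Ico hab.le
      (fun t ht => hz i t (by grind) (by grind))
      (fun t ht => hz0 i t (by grind))
  calc 1 / 2 < ∑ i, x i a - ∑ i, (Icc a b).inf' (nonempty_Icc.mpr hab.le) (x i) := by
        rw [hx1 a haT]; linarith
    _ = ∑ i, (x i a - (Icc a b).inf' (nonempty_Icc.mpr hab.le) (x i)) := (sum_sub_distrib ..).symm
    _ ≤ ∑ i, ∑ t ∈ Ico a b, z i t := sum_le_sum fun i _ => hdrop i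
    _ = ∑ t ∈ Ico a b, ∑ i, z i t := sum_comm

/-- Fact 2: if the sum of per-facility minima of the fractional assignment over an
interval `[a,b]` drops below `1/2`, then the LP switching variables over that interval
sum to more than `1/2`. -/
theorem fact_sum_z_gt_half
    {F : Type*} [Fintype F]
    (T : ℕ) (hT : 1 ≤ T)
    (x z : F → ℕ → ℝ)
    (hx0 : ∀ i, ∀ t ∈ Finset.Icc 1 T, 0 ≤ x i t)
    (hx1 : ∀ t ∈ Finset.Icc 1 T, ∑ i, x i t = 1)
    (hz0 : ∀ i, ∀ t ∈ Finset.Icc 1 T, 0 ≤ z i t)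
    (hz : ∀ i, ∀ t, 1 ≤ t → t < T → x i t - x i (t + 1) ≤ z i t)
    (a b : ℕ) (ha : 1 ≤ a) (hab : a < b) (hb : b ≤ T)
    (hmin : ∑ i, (Finset.Icc a b).inf' (Finset.nonempty_Icc.mpr hab.le) (x i) < 1 / 2) :
    1 / 2 < ∑ t ∈ Finset.Ico a b, ∑ i, z i t :=
  fact_sum_z_gt_half_general T x z hx1 hz0 hz a b ha hab hb hmin
end

section
/- Let $g \geq 0$ and consider a single client with LP variables as in Fact 2, partitioned greedily into $\ell$ intervals. Then $g \cdot (\ell - 1) \leq 2g \sum_{t=1}^{T-1} \sum_{i \in F} z_i^t$; i.e., the integral switching cost of changing facility only at interval boundaries is at most twice the LP switching cost of that client. -/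
open Finset

/-!
On each of the first `ℓ - 1` greedy intervals `[τ k, τ (k+1))` the LP mass drops from `1` at
time `τ k` to less than `1/2` in the pointwise minimum over `[τ k, τ (k+1)]` (otherwise the
interval would have been extended). Telescoping `x i t - x i (t+1) ≤ z i t` bounds that drop by
the `z`-mass of the interval, so each interval carries `z`-mass at least `1/2`; the intervals are
disjoint, which gives `ℓ - 1 ≤ 2 ∑ z`.
-/

theorem sub_le_sum_Ico_of_sub_succ_le {α : Type*} [AddCommGroup α] [PartialOrder α]
    [IsOrderedAddMonoid α] {f z : ℕ → α} {a u b : ℕ} (hau : a ≤ u) (hub : u ≤ b)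
    (hf : ∀ t ∈ Ico a b, f t - f (t + 1) ≤ z t) (hz : ∀ t ∈ Ico a b, 0 ≤ z t) :
    f a - f u ≤ ∑ t ∈ Ico a b, z t :=
  calc f a - f u = ∑ t ∈ Ico a u, (f t - f (t + 1)) := by
        rw [← neg_sub, ← sum_Ico_sub f hau, ← sum_neg_distrib]
        simp only [neg_sub]
    _ ≤ ∑ t ∈ Ico a u, z t :=
        sum_le_sum fun t ht => hf t (Ico_subset_Ico_right hub ht)
    _ ≤ ∑ t ∈ Ico a b, z t :=
        sum_le_sum_of_subset_of_nonneg (Ico_subset_Ico_right hub) fun t ht _ => hz t ht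

theorem sum_sub_sum_iInf_le_sum_Ico {F : Type*} [Fintype F] {x z : F → ℕ → ℝ} {a b : ℕ}
    (hab : a ≤ b) (hx : ∀ i, ∀ t ∈ Ico a b, x i t - x i (t + 1) ≤ z i t)
    (hz : ∀ i, ∀ t ∈ Ico a b, 0 ≤ z i t) :
    ∑ i, x i a - ∑ i, ⨅ u : (Ico a (b + 1)), x i u ≤ ∑ t ∈ Ico a b, ∑ i, z i t := by
  have : Nonempty (Ico a (b + 1)) := ⟨⟨a, by simp; omega⟩⟩
  choose u hu using fun i => exists_eq_ciInf_of_finite (f := fun v : Ico a (b + 1) => x i v)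
  have hdrop (i : F) : x i a - x i (u i) ≤ ∑ t ∈ Ico a b, z i t := by
    have hui := mem_Ico.mp (u i).2
    exact sub_le_sum_Ico_of_sub_succ_le hui.1 (by omega) (hx i) (hz i)
  calc ∑ i, x i a - ∑ i, ⨅ v : (Ico a (b + 1)), x i v = ∑ i, (x i a - x i (u i)) := by
        simp only [← hu, sum_sub_distrib]
    _ ≤ ∑ i, ∑ t ∈ Ico a b, z i t := sum_le_sum fun i _ => hdrop i
    _ = ∑ t ∈ Ico a b, ∑ i, z i t := sum_comm

theorem sum_Ico_sum_Ico_eq_sum_Ico {M : Type*} [AddCommMonoid M] (h : ℕ → M) {τ : ℕ → ℕ}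
    {m n : ℕ} (hmn : m ≤ n) (hτ : MonotoneOn τ (Set.Icc m n)) :
    ∑ j ∈ Ico m n, ∑ t ∈ Ico (τ j) (τ (j + 1)), h t = ∑ t ∈ Ico (τ m) (τ n), h t := by
  induction n, hmn using Nat.le_induction with
  | base => simp
  | succ n hmn ih =>
    have hτ' : MonotoneOn τ (Set.Icc m n) := hτ.mono (Set.Icc_subset_Icc_right n.le_succ)
    have mem {k : ℕ} (h1 : m ≤ k) (h2 : k ≤ n + 1) : k ∈ Set.Icc m (n + 1) := ⟨h1, h2⟩
    rw [sum_Ico_succ_top hmn, ih hτ', sum_Ico_consecutive _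
      (hτ (mem le_rfl (by omega)) (mem hmn (by omega)) hmn)
      (hτ (mem hmn (by omega)) (mem (by omega) le_rfl) n.le_succ)]

theorem nsmul_le_sum_Ico_of_le_sum_blocks {M : Type*} [AddCommMonoid M] [PartialOrder M]
    [IsOrderedAddMonoid M] {h : ℕ → M} {τ : ℕ → ℕ} {m n : ℕ} {c : M} (hmn : m ≤ n)
    (hτ : MonotoneOn τ (Set.Icc m n))
    (hblock : ∀ k ∈ Ico m n, c ≤ ∑ t ∈ Ico (τ k) (τ (k + 1)), h t) :
    (n - m) • c ≤ ∑ t ∈ Ico (τ m) (τ n), h t := by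
  rw [← sum_Ico_sum_Ico_eq_sum_Ico h hmn hτ, ← Nat.card_Ico]
  exact card_nsmul_le_sum _ _ _ hblock

theorem one_half_le_sum_Ico_of_isGreatest {F : Type*} [Fintype F] {x z : F → ℕ → ℝ}
    {T a b : ℕ} (ha : 1 ≤ a) (hab : a < b) (hbT : b ≤ T)
    (hx1 : ∀ t ∈ Icc 1 T, ∑ i, x i t = 1) (hz0 : ∀ i, ∀ t ∈ Icc 1 T, 0 ≤ z i t)
    (hz : ∀ i, ∀ t, 1 ≤ t → t < T → x i t - x i (t + 1) ≤ z i t)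
    (hgreedy : IsGreatest {t : ℕ | a < t ∧ t ≤ T + 1 ∧
      1 / 2 ≤ ∑ i, ⨅ u : (Ico a t), x i u} b) :
    1 / 2 ≤ ∑ t ∈ Ico a b, ∑ i, z i t := by
  have hmin : ∑ i, ⨅ u : (Ico a (b + 1)), x i u < 1 / 2 := by
    by_contra! h
    have := hgreedy.2 ⟨by omega, by omega, h⟩
    omega
  have hdrop := sum_sub_sum_iInf_le_sum_Ico (x := x) (z := z) hab.le
    (fun i t ht => hz i t (by simp at ht; omega) (by simp at ht; omega))
    (fun i t ht => hz0 i t (by simp at ht; simp; omega))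
  rw [hx1 a (mem_Icc.mpr ⟨ha, by omega⟩)] at hdrop
  linarith

theorem switching_cost_bound_general
    {F : Type*} [Fintype F]
    (T : ℕ)
    (g : ℝ) (hg : 0 ≤ g)
    (x z : F → ℕ → ℝ)
    (hx1 : ∀ t ∈ Finset.Icc 1 T, ∑ i, x i t = 1)
    (hz0 : ∀ i, ∀ t ∈ Finset.Icc 1 T, 0 ≤ z i t)
    (hz : ∀ i, ∀ t, 1 ≤ t → t < T → x i t - x i (t + 1) ≤ z i t)
    (ℓ : ℕ) (hℓ : 1 ≤ ℓ) (τ : ℕ → ℕ)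
    (hτ1 : τ 1 = 1) (hτend : τ (ℓ + 1) = T + 1)
    (hτmono : ∀ k ∈ Finset.Icc 1 ℓ, τ k < τ (k + 1))
    (hτgreedy : ∀ k ∈ Finset.Icc 1 ℓ,
      IsGreatest {t : ℕ | τ k < t ∧ t ≤ T + 1 ∧
          1 / 2 ≤ ∑ i, ⨅ u : (Finset.Ico (τ k) t), x i u}
        (τ (k + 1))) :
    g * ((ℓ - 1 : ℕ) : ℝ) ≤ 2 * g * ∑ t ∈ Finset.Ico 1 T, ∑ i, z i t := by
  have hτmonoOn : MonotoneOn τ (Set.Icc 1 (ℓ + 1)) :=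
    monotoneOn_of_le_succ Set.ordConnected_Icc fun k _ hk hk' => by
      rw [Order.succ_eq_add_one] at hk' ⊢
      exact (hτmono k (mem_Icc.mpr ⟨hk.1, by have := hk'.2; omega⟩)).le
  have hτℓ : τ ℓ ≤ T := by
    have := hτmono ℓ (mem_Icc.mpr ⟨hℓ, le_rfl⟩)
    omega
  have hblock : ∀ k ∈ Ico 1 ℓ, 1 / 2 ≤ ∑ t ∈ Ico (τ k) (τ (k + 1)), ∑ i, z i t := by
    intro k hk
    obtain ⟨hk1, hkℓ⟩ := mem_Ico.mp hk
    have hkIcc : k ∈ Icc 1 ℓ := mem_Icc.mpr ⟨hk1, hkℓ.le⟩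
    have ha : 1 ≤ τ k := hτ1 ▸ hτmonoOn ⟨le_rfl, by omega⟩ ⟨hk1, by omega⟩ hk1
    have hb : τ (k + 1) ≤ T := (hτmonoOn ⟨by omega, by omega⟩ ⟨hℓ, by omega⟩ hkℓ).trans hτℓ
    exact one_half_le_sum_Ico_of_isGreatest ha (hτmono k hkIcc) hb hx1 hz0 hz (hτgreedy k hkIcc)
  have hZ : ∀ t ∈ Ico 1 T, 0 ≤ ∑ i, z i t := fun t ht =>
    sum_nonneg fun i _ => hz0 i t (by simp at ht; simp; omega)
  calc g * ((ℓ - 1 : ℕ) : ℝ) = 2 * g * ((ℓ - 1) • (1 / 2 : ℝ)) := by rw [nsmul_eq_mul]; ring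
    _ ≤ 2 * g * ∑ t ∈ Ico (τ 1) (τ ℓ), ∑ i, z i t := by
      gcongr
      exact nsmul_le_sum_Ico_of_le_sum_blocks hℓ
        (hτmonoOn.mono (Set.Icc_subset_Icc_right ℓ.le_succ)) hblock
    _ ≤ 2 * g * ∑ t ∈ Ico 1 T, ∑ i, z i t := by
      gcongr 2 * g * ?_
      exact sum_le_sum_of_subset_of_nonneg (Ico_subset_Ico hτ1.ge hτℓ) fun t ht _ => hZ t ht

/-- Switching-cost bound: if time is partitioned greedily into `ℓ` intervals as in
Algorithm 1, then the integral switching cost `g (ℓ - 1)` is at most twice the LP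
switching cost of the client. -/
theorem switching_cost_bound
    {F : Type*} [Fintype F]
    (T : ℕ) (hT : 1 ≤ T)
    (g : ℝ) (hg : 0 ≤ g)
    (x z : F → ℕ → ℝ)
    (hx0 : ∀ i, ∀ t ∈ Finset.Icc 1 T, 0 ≤ x i t)
    (hx1 : ∀ t ∈ Finset.Icc 1 T, ∑ i, x i t = 1)
    (hz0 : ∀ i, ∀ t ∈ Finset.Icc 1 T, 0 ≤ z i t)
    (hz : ∀ i, ∀ t, 1 ≤ t → t < T → x i t - x i (t + 1) ≤ z i t)
    (ℓ : ℕ) (hℓ : 1 ≤ ℓ) (τ : ℕ → ℕ)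
    (hτ1 : τ 1 = 1) (hτend : τ (ℓ + 1) = T + 1)
    (hτmono : ∀ k ∈ Finset.Icc 1 ℓ, τ k < τ (k + 1))
    (hτgreedy : ∀ k ∈ Finset.Icc 1 ℓ,
      IsGreatest {t : ℕ | τ k < t ∧ t ≤ T + 1 ∧
          1 / 2 ≤ ∑ i, ⨅ u : (Finset.Ico (τ k) t), x i u}
        (τ (k + 1))) :
    g * ((ℓ - 1 : ℕ) : ℝ) ≤ 2 * g * ∑ t ∈ Finset.Ico 1 T, ∑ i, z i t :=
  switching_cost_bound_general T g hg x z hx1 hz0 hz ℓ hℓ τ hτ1 hτend hτmono hτgreedy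
end
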